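/- Let f : R^n → R be C³ on B(x⁰, Δ̄) with Hessian Lipschitz constant L. Let X have directions d¹,…,dᵐ with S = [d¹ ⋯ dᵐ] of full column rank m < n (underdetermined case), radius Δ < Δ̄. Let U = span S and Proj_U = S(SᵀS)^{-1}Sᵀ. Then ‖Proj_U ∇ᶜf(X) − Proj_U ∇f(x⁰)‖ ≤ (L√m/6)‖(Ŝᵀ)†‖ Δ², where ∇ᶜf(X) = (Sᵀ)†δᶜ, δᶜᵢ = (f(x⁰+dⁱ)−f(x⁰−dⁱ))/2, and Ŝ = S/Δ. -/

import Mathlib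

/-!
Since `P Sᵀ P = P`, the error vector is `P w` with residual `wᵢ = δᶜᵢ − ⟪∇f(x⁰), dⁱ⟫`, so its norm
is at most `‖P‖ √m maxᵢ |wᵢ|`, and `‖(Ŝᵀ)†‖ = ‖Δ P‖ = Δ ‖P‖`. Each `wᵢ` is a central-difference
error: for `h t = f (x⁰ + t dⁱ)`, the function `g t = h t − h (−t) − 2 t h'(0)` vanishes with its
derivative at `0`, and `|g''(t)| = |h''(t) − h''(−t)| ≤ 2 L ‖dⁱ‖³ t` by the Lipschitz bound on the
Hessian; integrating twice gives `|g 1| ≤ L ‖dⁱ‖³ / 3`, i.e. `|wᵢ| ≤ L Δ³ / 6`.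
-/

open Metric Matrix

/-- `B` is the Moore–Penrose pseudoinverse of `A`: the four Penrose equations. -/
def IsMPInv {n m : Type*} [Fintype n] [Fintype m]
    (A : Matrix n m ℝ) (B : Matrix m n ℝ) : Prop :=
  A * B * A = A ∧ B * A * B = B ∧ (A * B)ᵀ = A * B ∧ (B * A)ᵀ = B * A

/-- The ℓ²→ℓ² operator (spectral) norm of a real matrix. -/
noncomputable def opNorm {a b : ℕ} (A : Matrix (Fin a) (Fin b) ℝ) : ℝ :=
  ‖LinearMap.toContinuousLinearMap (Matrix.toEuclideanLin A)‖

open Set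

lemma norm_le_div_six_of_norm_deriv2_le {F : Type*} [NormedAddCommGroup F] [NormedSpace ℝ F]
    {g g' g'' : ℝ → F} {C : ℝ} (hg0 : g 0 = 0) (hg'0 : g' 0 = 0)
    (hg : ∀ t ∈ Icc (0 : ℝ) 1, HasDerivAt g (g' t) t)
    (hg' : ∀ t ∈ Icc (0 : ℝ) 1, HasDerivAt g' (g'' t) t)
    (hg'' : ∀ t ∈ Ico (0 : ℝ) 1, ‖g'' t‖ ≤ C * t) :
    ‖g 1‖ ≤ C / 6 := by
  have hg'_le : ∀ t ∈ Icc (0 : ℝ) 1, ‖g' t‖ ≤ C / 2 * t ^ 2 :=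
    image_norm_le_of_norm_deriv_right_le_deriv_boundary
      (fun t ht => (hg' t ht).continuousAt.continuousWithinAt)
      (fun t ht => (hg' t (Ico_subset_Icc_self ht)).hasDerivWithinAt)
      (by simp [hg'0])
      (fun t => by simpa using ((hasDerivAt_pow 2 t).const_mul (C / 2)).congr_deriv (by ring))
      hg''
  simpa using image_norm_le_of_norm_deriv_right_le_deriv_boundary
      (fun t ht => (hg t ht).continuousAt.continuousWithinAt)
      (fun t ht => (hg t (Ico_subset_Icc_self ht)).hasDerivWithinAt)
      (by simp [hg0]) (fun t => ((hasDerivAt_pow 3 t).const_mul (C / 6)).congr_deriv (by ring))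
      (fun t ht => hg'_le t (Ico_subset_Icc_self ht)) (right_mem_Icc.2 zero_le_one)

lemma abs_centralDiff_sub_deriv_le {h h' h'' : ℝ → ℝ} {K : ℝ}
    (hh : ∀ t ∈ Icc (-1 : ℝ) 1, HasDerivAt h (h' t) t)
    (hh' : ∀ t ∈ Icc (-1 : ℝ) 1, HasDerivAt h' (h'' t) t)
    (hK : ∀ s ∈ Icc (-1 : ℝ) 1, ∀ t ∈ Icc (-1 : ℝ) 1, |h'' s - h'' t| ≤ K * |s - t|) :
    |(h 1 - h (-1)) / 2 - h' 0| ≤ K / 6 := by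
  have hpos : ∀ t ∈ Icc (0 : ℝ) 1, t ∈ Icc (-1 : ℝ) 1 := fun t ht => ⟨by linarith [ht.1], ht.2⟩
  have hneg : ∀ t ∈ Icc (0 : ℝ) 1, -t ∈ Icc (-1 : ℝ) 1 :=
    fun t ht => ⟨by linarith [ht.2], by linarith [ht.1]⟩
  have hodd := norm_le_div_six_of_norm_deriv2_le (C := 2 * K)
    (g := fun t => h t - (h ∘ Neg.neg) t - 2 * t * h' 0)
    (g' := fun t => h' t + (h' ∘ Neg.neg) t - 2 * h' 0)
    (g'' := fun t => h'' t - h'' (-t))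
    (by simp) (by simp; ring)
    (fun t ht => (((hh t (hpos t ht)).sub ((hh (-t) (hneg t ht)).comp t (hasDerivAt_neg t))).sub
        (((hasDerivAt_id t).const_mul 2).mul_const (h' 0))).congr_deriv (by simp))
    (fun t ht => (((hh' t (hpos t ht)).add ((hh' (-t) (hneg t ht)).comp t
        (hasDerivAt_neg t))).sub_const (2 * h' 0)).congr_deriv (by simp [sub_eq_add_neg]))
    (fun t ht => by
      have ht' : t ∈ Icc (0 : ℝ) 1 := Ico_subset_Icc_self ht
      calc ‖h'' t - h'' (-t)‖ ≤ K * |t - -t| := hK t (hpos t ht') (-t) (hneg t ht')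
        _ = 2 * K * t := by
          rw [sub_neg_eq_add, abs_of_nonneg (by linarith [ht.1] : 0 ≤ t + t)]; ring)
  rw [Real.norm_eq_abs] at hodd
  simp only [Function.comp_apply, mul_one] at hodd
  rw [show (h 1 - h (-1)) / 2 - h' 0 = (h 1 - h (-1) - 2 * h' 0) / 2 by ring, abs_div,
    abs_two]
  linarith

section

variable {E F : Type*} [NormedAddCommGroup E] [NormedSpace ℝ E]

lemma add_smul_mem_ball {x₀ v : E} {r t : ℝ} (hv : ‖v‖ < r) (ht : t ∈ Icc (-1 : ℝ) 1) :
    x₀ + t • v ∈ ball x₀ r := by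
  rw [mem_ball, dist_eq_norm, add_sub_cancel_left, norm_smul, Real.norm_eq_abs]
  calc |t| * ‖v‖ ≤ 1 * ‖v‖ := by gcongr; exact abs_le.2 ht
    _ < r := by rwa [one_mul]

lemma hasDerivAt_comp_add_smul [NormedAddCommGroup F] [NormedSpace ℝ F] {G : E → F}
    {G' : E →L[ℝ] F} {x₀ v : E} {t : ℝ} (hG : HasFDerivAt G G' (x₀ + t • v)) :
    HasDerivAt (fun s : ℝ => G (x₀ + s • v)) (G' v) t := by
  simpa [Function.comp_def] using hG.comp_hasDerivAt t
    (((hasDerivAt_id t).smul_const v).const_add x₀)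

lemma abs_centralDiff_sub_fderiv_le {f : E → ℝ} {x₀ v : E} {r L : ℝ}
    (hf : ContDiffOn ℝ 2 f (ball x₀ r))
    (hL : ∀ x ∈ ball x₀ r, ∀ y ∈ ball x₀ r,
      ‖fderiv ℝ (fderiv ℝ f) x - fderiv ℝ (fderiv ℝ f) y‖ ≤ L * ‖x - y‖)
    (hv : ‖v‖ < r) :
    |(f (x₀ + v) - f (x₀ - v)) / 2 - fderiv ℝ f x₀ v| ≤ L * ‖v‖ ^ 3 / 6 := by
  have hC2 : ∀ x ∈ ball x₀ r, ContDiffAt ℝ 2 f x := fun x hx =>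
    hf.contDiffAt (isOpen_ball.mem_nhds hx)
  have hDf : ∀ x ∈ ball x₀ r, HasFDerivAt f (fderiv ℝ f x) x := fun x hx =>
    ((hC2 x hx).differentiableAt two_ne_zero).hasFDerivAt
  have hD2f : ∀ x ∈ ball x₀ r, HasFDerivAt (fderiv ℝ f) (fderiv ℝ (fderiv ℝ f) x) x :=
    fun x hx => (((hC2 x hx).fderiv_right one_add_one_eq_two.le).differentiableAt
      one_ne_zero).hasFDerivAt
  have h := abs_centralDiff_sub_deriv_le (K := L * ‖v‖ ^ 3)
    (h := fun t => f (x₀ + t • v))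
    (h' := fun t => fderiv ℝ f (x₀ + t • v) v)
    (h'' := fun t => fderiv ℝ (fderiv ℝ f) (x₀ + t • v) v v)
    (fun t ht => hasDerivAt_comp_add_smul (hDf _ (add_smul_mem_ball hv ht)))
    (fun t ht => (ContinuousLinearMap.apply ℝ ℝ v).hasFDerivAt.comp_hasDerivAt t
      (hasDerivAt_comp_add_smul (hD2f _ (add_smul_mem_ball hv ht))))
    (fun s hs t ht => by
      calc |fderiv ℝ (fderiv ℝ f) (x₀ + s • v) v v - fderiv ℝ (fderiv ℝ f) (x₀ + t • v) v v|
          = ‖(fderiv ℝ (fderiv ℝ f) (x₀ + s • v) - fderiv ℝ (fderiv ℝ f) (x₀ + t • v)) v v‖ :=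
            by simp
        _ ≤ ‖fderiv ℝ (fderiv ℝ f) (x₀ + s • v) - fderiv ℝ (fderiv ℝ f) (x₀ + t • v)‖
              * ‖v‖ * ‖v‖ := ContinuousLinearMap.le_opNorm₂ _ _ _
        _ ≤ L * ‖(x₀ + s • v) - (x₀ + t • v)‖ * ‖v‖ * ‖v‖ := by
            gcongr; exact hL _ (add_smul_mem_ball hv hs) _ (add_smul_mem_ball hv ht)
        _ = L * ‖v‖ ^ 3 * |s - t| := by
            rw [add_sub_add_left_eq_sub, ← sub_smul, norm_smul, Real.norm_eq_abs]; ring)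
  simpa [sub_eq_add_neg] using h

lemma nonneg_of_norm_sub_le_mul_norm_sub [Nontrivial E] [SeminormedAddCommGroup F] {G : E → F}
    {x₀ : E} {r L : ℝ} (hr : 0 < r)
    (hG : ∀ x ∈ ball x₀ r, ∀ y ∈ ball x₀ r, ‖G x - G y‖ ≤ L * ‖x - y‖) : 0 ≤ L := by
  obtain ⟨v, hv⟩ := exists_norm_eq E (half_pos hr).le
  have hmem : x₀ + v ∈ ball x₀ r := by
    rw [mem_ball, dist_eq_norm, add_sub_cancel_left, hv]; exact half_lt_self hr
  have h := (norm_nonneg _).trans (hG _ hmem x₀ (mem_ball_self hr))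
  rw [add_sub_cancel_left, hv] at h
  exact nonneg_of_mul_nonneg_left h (half_pos hr)

end

lemma EuclideanSpace.norm_le_sqrt_card_mul {ι : Type*} [Fintype ι] {x : EuclideanSpace ℝ ι}
    {c : ℝ} (hc : 0 ≤ c) (hx : ∀ i, |x i| ≤ c) : ‖x‖ ≤ √(Fintype.card ι) * c := by
  calc ‖x‖ = √(∑ i, ‖x i‖ ^ 2) := EuclideanSpace.norm_eq x
    _ ≤ √(∑ _i : ι, c ^ 2) := by
        gcongr with i; exact hx i
    _ = √(Fintype.card ι) * c := by
        rw [Finset.sum_const, Finset.card_univ, nsmul_eq_mul, Real.sqrt_mul (Nat.cast_nonneg _),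
          Real.sqrt_sq hc]

lemma opNorm_smul {a b : ℕ} (c : ℝ) (A : Matrix (Fin a) (Fin b) ℝ) :
    opNorm (c • A) = |c| * opNorm A := by
  rw [opNorm, opNorm, _root_.map_smul, _root_.map_smul, norm_smul, Real.norm_eq_abs]

lemma norm_toLp_mulVec_le {a b : ℕ} (A : Matrix (Fin a) (Fin b) ℝ) (x : Fin b → ℝ) :
    ‖WithLp.toLp 2 (A *ᵥ x)‖ ≤ opNorm A * ‖WithLp.toLp 2 x‖ := by
  rw [opNorm]
  simpa using (LinearMap.toContinuousLinearMap (Matrix.toEuclideanLin A)).le_opNorm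
    (WithLp.toLp 2 x)

lemma IsMPInv.mul_mulVec_sub {ι κ : Type*} [Fintype ι] [Fintype κ] {A : Matrix ι κ ℝ}
    {B : Matrix κ ι ℝ} (hAB : IsMPInv A B) (y : ι → ℝ) (x : κ → ℝ) :
    (B * A) *ᵥ (B *ᵥ y) - (B * A) *ᵥ x = B *ᵥ (y - A *ᵥ x) := by
  rw [mulVec_mulVec, hAB.2.1, mulVec_sub, mulVec_mulVec]

lemma transpose_of_mulVec_ofLp_apply {n m : ℕ} (d : Fin m → EuclideanSpace ℝ (Fin n))
    (g : EuclideanSpace ℝ (Fin n)) (i : Fin m) :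
    ((Matrix.of fun j i => d i j)ᵀ *ᵥ WithLp.ofLp g) i = inner ℝ g (d i) := by
  simp [mulVec, dotProduct, PiLp.inner_apply, mul_comm]

theorem gcsg_error_bound_underdetermined_general {n m : ℕ}
    (f : EuclideanSpace ℝ (Fin n) → ℝ)
    (x₀ : EuclideanSpace ℝ (Fin n)) (Δbar L Δ : ℝ)
    (hf : ContDiffOn ℝ 3 f (ball x₀ Δbar))
    (hL : ∀ x ∈ ball x₀ Δbar, ∀ y ∈ ball x₀ Δbar,
      ‖fderiv ℝ (fderiv ℝ f) x - fderiv ℝ (fderiv ℝ f) y‖ ≤ L * ‖x - y‖)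
    (d : Fin m → EuclideanSpace ℝ (Fin n))
    (hΔ : ∀ i, ‖d i‖ ≤ Δ) (hΔpos : 0 < Δ) (hΔbar : Δ < Δbar)
    (S : Matrix (Fin n) (Fin m) ℝ) (hS : S = Matrix.of fun j i => d i j)
    (hmn : m < n)
    (P : Matrix (Fin n) (Fin m) ℝ) (hP : IsMPInv Sᵀ P) :
    ‖(WithLp.equiv 2 (Fin n → ℝ)).symm fun j =>
        (P * Sᵀ).mulVec (P.mulVec fun i => (f (x₀ + d i) - f (x₀ - d i)) / 2) j -
          (P * Sᵀ).mulVec (WithLp.equiv 2 (Fin n → ℝ) (gradient f x₀)) j‖ ≤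
      L * Real.sqrt m / 6 * opNorm (Δ • P) * Δ ^ 2 := by
  have : Nonempty (Fin n) := Fin.pos_iff_nonempty.1 ((Nat.zero_le m).trans_lt hmn)
  have hL0 : 0 ≤ L :=
    nonneg_of_norm_sub_le_mul_norm_sub (G := fderiv ℝ (fderiv ℝ f)) (hΔpos.trans hΔbar) hL
  set w : Fin m → ℝ := fun i => (f (x₀ + d i) - f (x₀ - d i)) / 2 - fderiv ℝ f x₀ (d i)
  have hw : ∀ i, |w i| ≤ L * Δ ^ 3 / 6 := fun i =>
    (abs_centralDiff_sub_fderiv_le (hf.of_le (by norm_num)) hL ((hΔ i).trans_lt hΔbar)).trans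
      (by gcongr; exact hΔ i)
  have hresidual : (fun i => (f (x₀ + d i) - f (x₀ - d i)) / 2) -
      Sᵀ *ᵥ WithLp.ofLp (gradient f x₀) = w := by
    ext i
    simp [hS, transpose_of_mulVec_ofLp_apply, gradient, w, InnerProductSpace.toDual_symm_apply]
  calc _ = ‖WithLp.toLp 2 (P *ᵥ w)‖ := by rw [← hresidual, ← hP.mul_mulVec_sub]; rfl
    _ ≤ opNorm P * ‖WithLp.toLp 2 w‖ := norm_toLp_mulVec_le P w
    _ ≤ opNorm P * (√m * (L * Δ ^ 3 / 6)) := by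
        gcongr
        · exact norm_nonneg _
        · simpa using
            EuclideanSpace.norm_le_sqrt_card_mul (x := WithLp.toLp 2 w) (by positivity) hw
    _ = L * √m / 6 * opNorm (Δ • P) * Δ ^ 2 := by
        rw [opNorm_smul, abs_of_pos hΔpos]; ring

/-- GCSG error bound in the underdetermined case: if `S` has full column rank `m < n`,
`P = (Sᵀ)†`, `Proj_U = (Sᵀ)†Sᵀ = P Sᵀ` and `∇ᶜf(X) = P δᶜ`, then
`‖Proj_U ∇ᶜf(X) − Proj_U ∇f(x⁰)‖ ≤ (L√m/6)‖(Ŝᵀ)†‖Δ²` where `Ŝ = S/Δ`. -/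
theorem gcsg_error_bound_underdetermined {n m : ℕ}
    (f : EuclideanSpace ℝ (Fin n) → ℝ)
    (x₀ : EuclideanSpace ℝ (Fin n)) (Δbar L Δ : ℝ)
    (hf : ContDiffOn ℝ 3 f (ball x₀ Δbar))
    (hL : ∀ x ∈ ball x₀ Δbar, ∀ y ∈ ball x₀ Δbar,
      ‖fderiv ℝ (fderiv ℝ f) x - fderiv ℝ (fderiv ℝ f) y‖ ≤ L * ‖x - y‖)
    (d : Fin m → EuclideanSpace ℝ (Fin n))
    (hΔ : ∀ i, ‖d i‖ ≤ Δ) (hΔpos : 0 < Δ) (hΔbar : Δ < Δbar)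
    (S : Matrix (Fin n) (Fin m) ℝ) (hS : S = Matrix.of fun j i => d i j)
    (hmn : m < n) (hrank : S.rank = m)
    (P : Matrix (Fin n) (Fin m) ℝ) (hP : IsMPInv Sᵀ P) :
    ‖(WithLp.equiv 2 (Fin n → ℝ)).symm fun j =>
        (P * Sᵀ).mulVec (P.mulVec fun i => (f (x₀ + d i) - f (x₀ - d i)) / 2) j -
          (P * Sᵀ).mulVec (WithLp.equiv 2 (Fin n → ℝ) (gradient f x₀)) j‖ ≤
      L * Real.sqrt m / 6 * opNorm (Δ • P) * Δ ^ 2 :=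
  gcsg_error_bound_underdetermined_general f x₀ Δbar L Δ hf hL d hΔ hΔpos hΔbar S hS hmn P hP
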